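/- arXiv:2603.20919 — 2 statements merged into one kernel-verified Lean document; each statement's English description precedes it below -/
import Mathlib

section
/- Let g : ℝ^d → ℝ be a Neural Decision Tree function and let E(x) = ∇g(x) be its explanation map. Then E is globally Lipschitz on ℝ^d: there exists a constant L ≥ 0 such that ‖E(x) − E(x')‖ ≤ L ‖x − x'‖ for all x, x' ∈ ℝ^d, so that small perturbations of the input produce proportionally small variations of the explanation. -/
/-!
An NDT function is built from the maps `x ↦ tanh (γ * (x j - α))` by products and linear
combinations. Each of these maps is bounded and Lipschitz with Lipschitz derivative, and this
class of functions is closed under sums and products: by the Leibniz rule the derivative of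
`f * g` is `f • g' + g • f'`, and a product of bounded Lipschitz functions is again bounded and
Lipschitz. The same remark applied to `tanh' = 1 - tanh ^ 2` starts the induction. The gradient
differs from the Fréchet derivative by the Riesz isometry, so it is Lipschitz as well.
-/

/-- A Neural Decision Tree function `g : ℝ^d → ℝ`,
`g x = ∑_{k=1}^{K} a_k ∏_{m ∈ P_k} tanh (γ (x_{j_m} - α_m))`, where `K ≥ 1` is
the number of root-to-leaf paths, `a_k` are the leaf values, `P_k` is the
finite set of splits along path `k`, each split `m` has feature index `j m`
and threshold `α m`, and `γ > 0` is the sharpness parameter. -/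
noncomputable def NDT {d K : ℕ} {M : Type*} (a : Fin K → ℝ) (P : Fin K → Finset M)
    (j : M → Fin d) (α : M → ℝ) (γ : ℝ) (x : EuclideanSpace ℝ (Fin d)) : ℝ :=
  ∑ k : Fin K, a k * ∏ m ∈ P k, Real.tanh (γ * (x (j m) - α m))

open scoped NNReal

theorem LipschitzWith.smul_of_norm_le {α 𝕜 F : Type*} [PseudoMetricSpace α] [NormedField 𝕜]
    [NormedAddCommGroup F] [NormedSpace 𝕜 F] {u : α → 𝕜} {v : α → F} {Ku Kv Bu Bv : ℝ≥0}
    (hu : LipschitzWith Ku u) (hv : LipschitzWith Kv v)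
    (hBu : ∀ x, ‖u x‖ ≤ Bu) (hBv : ∀ x, ‖v x‖ ≤ Bv) :
    LipschitzWith (Bu * Kv + Bv * Ku) (fun x => u x • v x) := by
  refine LipschitzWith.of_dist_le_mul fun x y => ?_
  rw [dist_eq_norm]
  calc ‖u x • v x - u y • v y‖ = ‖u x • (v x - v y) + (u x - u y) • v y‖ := by
        rw [smul_sub, sub_smul, sub_add_sub_cancel]
    _ ≤ ‖u x‖ * ‖v x - v y‖ + ‖u x - u y‖ * ‖v y‖ := by
        grw [norm_add_le, norm_smul, norm_smul]
    _ ≤ Bu * (Kv * dist x y) + Ku * dist x y * Bv := by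
        rw [← dist_eq_norm, ← dist_eq_norm]
        gcongr
        exacts [hBu x, hv.dist_le_mul x y, hu.dist_le_mul x y, hBv y]
    _ = ↑(Bu * Kv + Bv * Ku) * dist x y := by push_cast; ring

theorem lipschitzWith_gradient_iff {𝕜 E : Type*} [RCLike 𝕜] [NormedAddCommGroup E]
    [InnerProductSpace 𝕜 E] [CompleteSpace E] {f : E → 𝕜} {K : ℝ≥0} :
    LipschitzWith K (gradient f) ↔ LipschitzWith K (fderiv 𝕜 f) :=
  (InnerProductSpace.toDual 𝕜 E).symm.isometry.lipschitzWith_iff K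

/-- The class `C^{1,1}_b` of real functions. -/
structure IsBoundedC11 {E : Type*} [NormedAddCommGroup E] [NormedSpace ℝ E] (f : E → ℝ) :
    Prop where
  differentiable : Differentiable ℝ f
  bounded : ∃ B : ℝ≥0, ∀ x, ‖f x‖ ≤ B
  lipschitz : ∃ K, LipschitzWith K f
  lipschitz_fderiv : ∃ K, LipschitzWith K (fderiv ℝ f)

namespace IsBoundedC11

variable {E F : Type*} [NormedAddCommGroup E] [NormedSpace ℝ E]
  [NormedAddCommGroup F] [NormedSpace ℝ F]

theorem const (c : ℝ) : IsBoundedC11 fun _ : E => c where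
  differentiable := differentiable_const c
  bounded := ⟨‖c‖₊, fun _ => le_rfl⟩
  lipschitz := ⟨0, LipschitzWith.const c⟩
  lipschitz_fderiv := ⟨0, by rw [fderiv_fun_const]; exact LipschitzWith.const 0⟩

variable {f g : E → ℝ}

theorem add (hf : IsBoundedC11 f) (hg : IsBoundedC11 g) : IsBoundedC11 fun x => f x + g x := by
  obtain ⟨hfd, ⟨Bf, hBf⟩, ⟨Kf, hKf⟩, ⟨Lf, hLf⟩⟩ := hf
  obtain ⟨hgd, ⟨Bg, hBg⟩, ⟨Kg, hKg⟩, ⟨Lg, hLg⟩⟩ := hg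
  refine ⟨hfd.add hgd, ⟨Bf + Bg, fun x => ?_⟩, ⟨Kf + Kg, hKf.add hKg⟩, ⟨Lf + Lg, ?_⟩⟩
  · grw [norm_add_le, hBf, hBg, NNReal.coe_add]
  · have hderiv : fderiv ℝ (fun x => f x + g x) = fun x => fderiv ℝ f x + fderiv ℝ g x :=
      funext fun x => fderiv_fun_add (hfd x) (hgd x)
    rw [hderiv]
    exact hLf.add hLg

theorem mul (hf : IsBoundedC11 f) (hg : IsBoundedC11 g) : IsBoundedC11 fun x => f x * g x := by
  obtain ⟨hfd, ⟨Bf, hBf⟩, ⟨Kf, hKf⟩, ⟨Lf, hLf⟩⟩ := hf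
  obtain ⟨hgd, ⟨Bg, hBg⟩, ⟨Kg, hKg⟩, ⟨Lg, hLg⟩⟩ := hg
  have hf' (x : E) : ‖fderiv ℝ f x‖ ≤ Kf := norm_fderiv_le_of_lipschitz ℝ hKf
  have hg' (x : E) : ‖fderiv ℝ g x‖ ≤ Kg := norm_fderiv_le_of_lipschitz ℝ hKg
  refine ⟨hfd.mul hgd, ⟨Bf * Bg, fun x => ?_⟩,
    ⟨_, by simpa only [smul_eq_mul] using hKf.smul_of_norm_le hKg hBf hBg⟩, ?_⟩
  · rw [norm_mul, NNReal.coe_mul]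
    exact mul_le_mul (hBf x) (hBg x) (norm_nonneg _) Bf.coe_nonneg
  · have hderiv : fderiv ℝ (fun x => f x * g x) =
        fun x => f x • fderiv ℝ g x + g x • fderiv ℝ f x :=
      funext fun x => fderiv_fun_mul (hfd x) (hgd x)
    rw [hderiv]
    exact ⟨_, (hKf.smul_of_norm_le hLg hBf hg').add (hKg.smul_of_norm_le hLf hBg hf')⟩

theorem sum {ι : Type*} (s : Finset ι) {f : ι → E → ℝ} (hf : ∀ i ∈ s, IsBoundedC11 (f i)) :
    IsBoundedC11 fun x => ∑ i ∈ s, f i x := by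
  induction s using Finset.cons_induction with
  | empty => simpa only [Finset.sum_empty] using const 0
  | cons i s hi ih =>
    simp only [Finset.sum_cons]
    exact (hf i (Finset.mem_cons_self i s)).add (ih fun k hk => hf k (Finset.mem_cons_of_mem hk))

theorem prod {ι : Type*} (s : Finset ι) {f : ι → E → ℝ} (hf : ∀ i ∈ s, IsBoundedC11 (f i)) :
    IsBoundedC11 fun x => ∏ i ∈ s, f i x := by
  induction s using Finset.cons_induction with
  | empty => simpa only [Finset.prod_empty] using const 1
  | cons i s hi ih =>
    simp only [Finset.prod_cons]
    exact (hf i (Finset.mem_cons_self i s)).mul (ih fun k hk => hf k (Finset.mem_cons_of_mem hk))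

theorem comp_add_const {φ : F → ℝ} (hφ : IsBoundedC11 φ) (ℓ : E →L[ℝ] F) (c : F) :
    IsBoundedC11 fun x => φ (ℓ x + c) := by
  obtain ⟨hd, ⟨B, hB⟩, ⟨K, hK⟩, ⟨L, hL⟩⟩ := hφ
  have hA : LipschitzWith (‖ℓ‖₊ + 0) fun x => ℓ x + c :=
    LipschitzWith.add ℓ.lipschitz (LipschitzWith.const c)
  have hφA (x : E) : HasFDerivAt (fun x => φ (ℓ x + c)) ((fderiv ℝ φ (ℓ x + c)).comp ℓ) x :=
    (hd _).hasFDerivAt.comp x (ℓ.hasFDerivAt.add_const c)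
  refine ⟨fun x => (hφA x).differentiableAt, ⟨B, fun x => hB _⟩, ⟨_, hK.comp hA⟩, ?_⟩
  rw [funext fun x => (hφA x).fderiv]
  exact ⟨_, ((ContinuousLinearMap.compL ℝ E F ℝ).flip ℓ).lipschitz.comp (hL.comp hA)⟩

end IsBoundedC11

namespace Real

theorem hasDerivAt_tanh (t : ℝ) : HasDerivAt tanh (1 - tanh t ^ 2) t := by
  have h := (hasDerivAt_sinh t).div (hasDerivAt_cosh t) (cosh_pos t).ne'
  rw [show sinh / cosh = tanh from (funext tanh_eq_sinh_div_cosh).symm] at h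
  refine h.congr_deriv ?_
  rw [tanh_eq_sinh_div_cosh]
  field_simp

theorem lipschitzWith_tanh : LipschitzWith 1 tanh :=
  lipschitzWith_of_nnnorm_deriv_le (fun t => (hasDerivAt_tanh t).differentiableAt) fun t => by
    rw [← NNReal.coe_le_coe, coe_nnnorm, (hasDerivAt_tanh t).deriv, NNReal.coe_one,
      norm_eq_abs, abs_le]
    constructor <;> nlinarith [tanh_sq_lt_one t, sq_nonneg (tanh t)]

theorem isBoundedC11_tanh : IsBoundedC11 tanh := by
  have hsq : LipschitzWith (1 * 1 + 1 * 1) fun t => tanh t * tanh t :=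
    lipschitzWith_tanh.smul_of_norm_le lipschitzWith_tanh
      (fun t => (abs_tanh_lt_one t).le) (fun t => (abs_tanh_lt_one t).le)
  have hderiv : fderiv ℝ tanh =
      fun t => ContinuousLinearMap.toSpanSingletonLIE ℝ ℝ (1 - tanh t * tanh t) := by
    ext1 t
    rw [← toSpanSingleton_deriv, (hasDerivAt_tanh t).deriv, sq]
    rfl
  refine ⟨fun t => (hasDerivAt_tanh t).differentiableAt, ⟨1, fun t => (abs_tanh_lt_one t).le⟩,
    ⟨1, lipschitzWith_tanh⟩, ?_⟩
  rw [hderiv]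
  exact ⟨_, (ContinuousLinearMap.toSpanSingletonLIE ℝ ℝ).lipschitz.comp
    ((LipschitzWith.const 1).sub hsq)⟩

end Real

theorem isBoundedC11_tanh_const_mul_coord_sub {ι : Type*} [Fintype ι] (i : ι) (γ α : ℝ) :
    IsBoundedC11 fun x : EuclideanSpace ℝ ι => Real.tanh (γ * (x i - α)) := by
  convert Real.isBoundedC11_tanh.comp_add_const (γ • EuclideanSpace.proj i) (-(γ * α))
    using 3 with x
  simp only [smul_apply, PiLp.proj_apply, smul_eq_mul]
  ring

theorem isBoundedC11_ndt {d K : ℕ} {M : Type*} (a : Fin K → ℝ) (P : Fin K → Finset M)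
    (j : M → Fin d) (α : M → ℝ) (γ : ℝ) : IsBoundedC11 (NDT a P j α γ) :=
  IsBoundedC11.sum Finset.univ fun k _ => (IsBoundedC11.const (a k)).mul <|
    IsBoundedC11.prod (P k) fun m _ => isBoundedC11_tanh_const_mul_coord_sub (j m) γ (α m)

theorem ndt_gradient_lipschitz_general {d K : ℕ} {M : Type*}
    (a : Fin K → ℝ) (P : Fin K → Finset M) (j : M → Fin d) (α : M → ℝ)
    (γ : ℝ) :
    ∃ L : ℝ, 0 ≤ L ∧ ∀ x x' : EuclideanSpace ℝ (Fin d),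
      ‖gradient (NDT a P j α γ) x - gradient (NDT a P j α γ) x'‖ ≤
        L * ‖x - x'‖ := by
  obtain ⟨L, hL⟩ := (isBoundedC11_ndt a P j α γ).lipschitz_fderiv
  refine ⟨L, L.coe_nonneg, fun x x' => ?_⟩
  rw [← dist_eq_norm, ← dist_eq_norm]
  exact (lipschitzWith_gradient_iff.2 hL).dist_le_mul x x'

/-- The explanation map `E x = ∇g x` of a Neural Decision Tree function `g`
is globally Lipschitz on ℝ^d: there is `L ≥ 0` with
`‖E x - E x'‖ ≤ L * ‖x - x'‖` for all `x, x'`. -/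
theorem ndt_gradient_lipschitz {d K : ℕ} {M : Type*} (hK : 1 ≤ K)
    (a : Fin K → ℝ) (P : Fin K → Finset M) (j : M → Fin d) (α : M → ℝ)
    (γ : ℝ) (hγ : 0 < γ) :
    ∃ L : ℝ, 0 ≤ L ∧ ∀ x x' : EuclideanSpace ℝ (Fin d),
      ‖gradient (NDT a P j α γ) x - gradient (NDT a P j α γ) x'‖ ≤
        L * ‖x - x'‖ :=
  ndt_gradient_lipschitz_general a P j α γ
end

section
/- Let d ≥ 1, let x₀ ∈ ℝ^d, and let f : ℝ^d → ℝ be twice continuously differentiable on a neighborhood of x₀ with nonzero Hessian H_f(x₀) ≠ 0. Then there exist constants c > 0 and r₀ > 0 such that for every r with 0 < r ≤ r₀ and every affine function g : ℝ^d → ℝ (i.e., g(x) = wᵀx + b for some w ∈ ℝ^d, b ∈ ℝ), one has sup_{x : ‖x − x₀‖ ≤ r} |f(x) − g(x)| ≥ c r² ‖H_f(x₀)‖. In particular, the best local approximation error of f by affine (linear) surrogate models on the ball B(x₀, r) is bounded below by a positive multiple of r² ‖H_f(x₀)‖. -/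
/-!
The second difference `f (x₀ + r v) + f (x₀ - r v) - 2 f (x₀)` kills every affine function, and
for `f` it equals `r² H v v + o(r²)` by Taylor's formula. By polarization there is a unit vector
`v` with `|H v v| > ‖H‖ / 2`, so for small `r` the second difference of `f - g` has size at least
`r² ‖H‖ / 2`; being a combination of three values of `f - g` on the ball of radius `r` with total
weight `4`, it is at most `4` times the sup of `|f - g|` there.
-/

open Filter Topology Asymptotics Metric
open scoped RealInnerProductSpace

section Polarization

variable {E : Type*} [NormedAddCommGroup E] [InnerProductSpace ℝ E] {H : E →L[ℝ] E →L[ℝ] ℝ}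

theorem opNorm_le_of_abs_apply_self_le (hH : ∀ u v, H u v = H v u) {K : ℝ} (hK0 : 0 ≤ K)
    (hK : ∀ x, |H x x| ≤ K * ‖x‖ ^ 2) : ‖H‖ ≤ K := by
  refine H.opNorm_le_of_unit_norm hK0 fun u hu => (H u).opNorm_le_of_unit_norm hK0 fun w hw => ?_
  have hpolar : 4 * H u w = H (u + w) (u + w) - H (u - w) (u - w) := by
    simp only [map_add, map_sub, add_apply, sub_apply, hH w u]
    ring
  have hpar := parallelogram_law_with_norm ℝ u w
  rw [hu, hw] at hpar
  rw [Real.norm_eq_abs]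
  have : 4 * |H u w| ≤ 4 * K :=
    calc 4 * |H u w| = |H (u + w) (u + w) - H (u - w) (u - w)| := by
          rw [← hpolar, abs_mul]; norm_num
      _ ≤ |H (u + w) (u + w)| + |H (u - w) (u - w)| := abs_sub _ _
      _ ≤ K * (‖u + w‖ ^ 2 + ‖u - w‖ ^ 2) := by linarith [hK (u + w), hK (u - w)]
      _ = 4 * K := by rw [hpar]; ring
  linarith

theorem exists_norm_eq_one_lt_abs_apply_self (hH : ∀ u v, H u v = H v u) {K : ℝ}
    (hK0 : 0 ≤ K) (hK : K < ‖H‖) : ∃ v : E, ‖v‖ = 1 ∧ K < |H v v| := by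
  by_contra! hle
  refine hK.not_ge (opNorm_le_of_abs_apply_self_le hH hK0 fun x => ?_)
  rcases eq_or_ne x 0 with rfl | hx
  · simp
  have := hle (‖x‖⁻¹ • x) (norm_smul_inv_norm hx)
  simp only [map_smul, smul_apply, smul_eq_mul, abs_mul, abs_inv, abs_norm] at this
  calc |H x x| = ‖x‖ ^ 2 * (‖x‖⁻¹ * (‖x‖⁻¹ * |H x x|)) := by field_simp
    _ ≤ K * ‖x‖ ^ 2 := by nlinarith [sq_nonneg ‖x‖]

end Polarization

section SecondDifference

variable {E F : Type*} [NormedAddCommGroup E] [NormedSpace ℝ E] [NormedAddCommGroup F]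
  [NormedSpace ℝ F] {f : E → F} {f' : E → E →L[ℝ] F} {f'' : E →L[ℝ] E →L[ℝ] F} {x : E}

theorem isLittleO_secondDifference (hf : ∀ᶠ y in 𝓝 x, HasFDerivAt f (f' y) y)
    (hx : HasFDerivAt f' f'' x) (v : E) :
    (fun h : ℝ => f (x + h • v) + f (x - h • v) - (2 : ℝ) • f x - h ^ 2 • f'' v v)
      =o[𝓝[>] 0] fun h => h ^ 2 := by
  obtain ⟨ε, hε, hball⟩ := Metric.eventually_nhds_iff_ball.1 hf
  -- Taylor's formula applies along directions pointing into `ball x ε`, hence to `± c • v` for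
  -- small `c`; the general case follows by rescaling `h`.
  have htaylor : ∀ w, x + w ∈ ball x ε →
      (fun h : ℝ => f (x + h • w) - f x - h • f' x w - (h ^ 2 / 2) • f'' w w)
        =o[𝓝[>] 0] fun h => h ^ 2 := by
    intro w hw
    have := (convex_ball x ε).taylor_approx_two_segment (v := 0) (w := w)
      (by simpa [isOpen_ball.interior_eq] using hball) (mem_ball_self hε)
      (by simpa [isOpen_ball.interior_eq] using hx.hasFDerivWithinAt)
      (by simpa [isOpen_ball.interior_eq] using hε) (by simpa [isOpen_ball.interior_eq] using hw)
    simpa using this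
  obtain ⟨c, hc, hcε⟩ : ∃ c, 0 < c ∧ c * ‖v‖ < ε :=
    ⟨ε / (‖v‖ + 1), by positivity, by rw [div_mul_eq_mul_div, div_lt_iff₀ (by positivity)]; nlinarith⟩
  have hcv : ∀ w, ‖w‖ = c * ‖v‖ → x + w ∈ ball x ε := fun w hw => by
    rwa [mem_ball_iff_norm, add_sub_cancel_left, hw]
  have hsum := (htaylor (c • v) (hcv _ (by simp [norm_smul, hc.le]))).add
    (htaylor (-(c • v)) (hcv _ (by simp [norm_smul, hc.le])))
  have hscale : Tendsto (fun h : ℝ => c⁻¹ * h) (𝓝[>] 0) (𝓝[>] 0) := by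
    refine tendsto_nhdsWithin_of_tendsto_nhds_of_eventually_within _ ?_ ?_
    · exact ((continuous_const_mul c⁻¹).tendsto' 0 0 (mul_zero _)).mono_left nhdsWithin_le_nhds
    · filter_upwards [self_mem_nhdsWithin] with h hh using mul_pos (inv_pos.2 hc) hh
  have hsq : (fun h : ℝ => (c⁻¹ * h) ^ 2) =O[𝓝[>] 0] fun h => h ^ 2 := by
    simpa only [mul_pow] using (isBigO_refl (fun h : ℝ => h ^ 2) _).const_mul_left (c⁻¹ ^ 2)
  refine ((hsum.comp_tendsto hscale).trans_isBigO hsq).congr_left fun h => ?_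
  have hch : c⁻¹ * h * c = h := by field_simp
  have hch2 : (c⁻¹ * h) ^ 2 / 2 * (c * c) = h ^ 2 / 2 := by field_simp
  simp only [Function.comp_apply, smul_smul, smul_neg, hch, hch2, map_neg, map_smul, neg_apply,
    smul_apply, ← sub_eq_add_neg]
  module

theorem eventually_le_abs_secondDifference {f : E → ℝ} {f' : E → E →L[ℝ] ℝ}
    {f'' : E →L[ℝ] E →L[ℝ] ℝ} (hf : ∀ᶠ y in 𝓝 x, HasFDerivAt f (f' y) y)
    (hx : HasFDerivAt f' f'' x) {v : E} {K : ℝ} (hK : K < |f'' v v|) :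
    ∀ᶠ h in 𝓝[>] (0 : ℝ), K * h ^ 2 ≤ |f (x + h • v) + f (x - h • v) - 2 * f x| := by
  filter_upwards [(isLittleO_secondDifference hf hx v).def (sub_pos.2 hK)] with h hh
  rw [Real.norm_eq_abs, Real.norm_eq_abs, abs_of_nonneg (sq_nonneg h), smul_eq_mul,
    smul_eq_mul] at hh
  have := abs_sub_abs_le_abs_sub (h ^ 2 * f'' v v) (f (x + h • v) + f (x - h • v) - 2 * f x)
  rw [abs_sub_comm (h ^ 2 * f'' v v), abs_mul, abs_of_nonneg (sq_nonneg h)] at this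
  nlinarith

end SecondDifference

theorem le_biSup_of_bddAbove_image {α β : Type*} [ConditionallyCompleteLattice α] {g : β → α}
    {s : Set β} (hg : BddAbove (g '' s)) {c : β} (hc : c ∈ s) : g c ≤ ⨆ y ∈ s, g y := by
  obtain ⟨M, hM⟩ := hg
  refine le_ciSup₂ (f := fun y _ => g y) ⟨M, ?_⟩ c hc
  rintro _ ⟨_, ⟨y, rfl⟩, ⟨hy, rfl⟩⟩
  exact hM ⟨y, hy, rfl⟩

theorem abs_secondDifference_le_four_mul_biSup {E : Type*} [SeminormedAddCommGroup E]
    {e : E → ℝ} {x v : E} {r : ℝ} (he : BddAbove ((fun y => |e y|) '' closedBall x r))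
    (hv : ‖v‖ ≤ r) :
    |e (x + v) + e (x - v) - 2 * e x| ≤ 4 * ⨆ y ∈ closedBall x r, |e y| := by
  have hmem : ∀ u, ‖u‖ ≤ r → |e (x + u)| ≤ ⨆ y ∈ closedBall x r, |e y| := fun u hu =>
    le_biSup_of_bddAbove_image he (by rwa [mem_closedBall, dist_eq_norm, add_sub_cancel_left])
  have hx := hmem 0 (by simpa using (norm_nonneg v).trans hv)
  have hplus := hmem v hv
  have hminus := hmem (-v) (by rwa [norm_neg])
  rw [add_zero] at hx
  rw [← sub_eq_add_neg] at hminus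
  calc |e (x + v) + e (x - v) - 2 * e x| ≤ |e (x + v)| + |e (x - v)| + 2 * |e x| := by
        grw [abs_sub, abs_add_le, abs_mul, abs_two]
    _ ≤ _ := by linarith

theorem affine_surrogate_fidelity_lower_bound_general (d : ℕ)
    (x₀ : EuclideanSpace ℝ (Fin d)) (f : EuclideanSpace ℝ (Fin d) → ℝ)
    (U : Set (EuclideanSpace ℝ (Fin d))) (hU : U ∈ nhds x₀)
    (hf : ContDiffOn ℝ 2 f U)
    (hH : fderiv ℝ (fderiv ℝ f) x₀ ≠ 0) :
    ∃ c > (0 : ℝ), ∃ r₀ > (0 : ℝ), ∀ r : ℝ, 0 < r → r ≤ r₀ →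
      ∀ (w : EuclideanSpace ℝ (Fin d)) (b : ℝ),
        c * r ^ 2 * ‖fderiv ℝ (fderiv ℝ f) x₀‖ ≤
          ⨆ x ∈ Metric.closedBall x₀ r, |f x - (⟪w, x⟫ + b)| := by
  set H := fderiv ℝ (fderiv ℝ f) x₀
  have hfx₀ : ContDiffAt ℝ 2 f x₀ := hf.contDiffAt hU
  have hsymm : ∀ u v, H u v = H v u :=
    hfx₀.isSymmSndFDerivAt (by simp [minSmoothness_of_isRCLikeNormedField])
  obtain ⟨v, hv, hHv⟩ := exists_norm_eq_one_lt_abs_apply_self hsymm (K := ‖H‖ / 2)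
    (by positivity) (half_lt_self (by positivity))
  have hderiv : ∀ᶠ y in 𝓝 x₀, HasFDerivAt f (fderiv ℝ f y) y :=
    (hfx₀.eventually (by simp)).mono fun y hy => (hy.differentiableAt two_ne_zero).hasFDerivAt
  have hderiv2 : HasFDerivAt (fderiv ℝ f) H x₀ :=
    ((hfx₀.fderiv_right (m := 1) le_rfl).differentiableAt one_ne_zero).hasFDerivAt
  obtain ⟨r₀, hr₀, hr₀U⟩ := mem_nhdsGT_iff_exists_Ioc_subset.1
    ((eventually_le_abs_secondDifference hderiv hderiv2 hHv).and
      ((eventually_closedBall_subset hU).filter_mono nhdsWithin_le_nhds))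
  refine ⟨1 / 8, by norm_num, r₀, hr₀, fun r hr hrr₀ w b => ?_⟩
  obtain ⟨hsecond, hball⟩ := hr₀U ⟨hr, hrr₀⟩
  set e := fun x => f x - (⟪w, x⟫ + b)
  have he : BddAbove ((fun y => |e y|) '' closedBall x₀ r) :=
    (isCompact_closedBall x₀ r).bddAbove_image
      ((hf.continuousOn.mono hball).sub (by fun_prop)).abs
  have haffine : e (x₀ + r • v) + e (x₀ - r • v) - 2 * e x₀
      = f (x₀ + r • v) + f (x₀ - r • v) - 2 * f x₀ := by
    simp only [e, inner_add_right, inner_sub_right]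
    ring
  have hsup := abs_secondDifference_le_four_mul_biSup he (v := r • v)
    (by rw [norm_smul, hv, mul_one, Real.norm_of_nonneg hr.le])
  rw [haffine] at hsup
  linarith

/-- Lower bound on the local fidelity error of affine (linear) surrogates:
if `f : ℝ^d → ℝ` is twice continuously differentiable on a neighborhood of
`x₀` with nonzero Hessian `H_f(x₀) = fderiv ℝ (fderiv ℝ f) x₀ ≠ 0`, then there
are `c > 0` and `r₀ > 0` such that for every radius `0 < r ≤ r₀` and every
affine function `g x = ⟪w, x⟫ + b`, the sup of `|f x - g x|` over the closed
ball `B(x₀, r)` is at least `c * r² * ‖H_f(x₀)‖`. -/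
theorem affine_surrogate_fidelity_lower_bound (d : ℕ) (hd : 1 ≤ d)
    (x₀ : EuclideanSpace ℝ (Fin d)) (f : EuclideanSpace ℝ (Fin d) → ℝ)
    (U : Set (EuclideanSpace ℝ (Fin d))) (hU : U ∈ nhds x₀)
    (hf : ContDiffOn ℝ 2 f U)
    (hH : fderiv ℝ (fderiv ℝ f) x₀ ≠ 0) :
    ∃ c > (0 : ℝ), ∃ r₀ > (0 : ℝ), ∀ r : ℝ, 0 < r → r ≤ r₀ →
      ∀ (w : EuclideanSpace ℝ (Fin d)) (b : ℝ),
        c * r ^ 2 * ‖fderiv ℝ (fderiv ℝ f) x₀‖ ≤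
          ⨆ x ∈ Metric.closedBall x₀ r, |f x - (⟪w, x⟫ + b)| :=
  affine_surrogate_fidelity_lower_bound_general d x₀ f U hU hf hH
end
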